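/- Let E be a real Hilbert space, γ: E → L²(Γ) a bounded linear operator such that for every ε>0 there is C(ε)>0 with ‖γv‖_{L²(Γ)} ≤ ε‖v‖_E + C(ε)‖v‖_H for all v ∈ E, where ‖·‖_H is a second (weaker) norm on E. Suppose A: E → E* satisfies ⟨A(w₁) − A(w₂), w₁ − w₂⟩ ≥ m_A‖w₁ − w₂‖²_E − m_A‖w₁ − w₂‖²_H, and ξ₁, ξ₂ ∈ L²(Γ) satisfy ⟨ξ₂ − ξ₁, γ(w₁ − w₂)⟩_{L²(Γ)} ≥ −m_j‖γ(w₁ − w₂)‖²_{L²(Γ)} with m_j ≥ 0. Then for every ε ∈ (0, m_A) there exists C'(ε) > 0 such that ⟨A(w₁) − A(w₂), w₁ − w₂⟩ + ⟨ξ₂ − ξ₁, γ(w₁ − w₂)⟩_{L²(Γ)} ≥ (m_A − ε)‖w₁ − w₂‖²_E − (m_A + C'(ε))‖w₁ − w₂‖²_H. -/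

import Mathlib

/-- Absorbing the relaxed-monotonicity boundary term via the Ehrling-type trace
estimate: for every `ε ∈ (0, m_A)` there is `C'(ε) > 0` such that
`⟨A w₁ − A w₂, w₁ − w₂⟩ + ⟨ξ₂ − ξ₁, γ(w₁ − w₂)⟩ ≥ (m_A − ε)‖w₁ − w₂‖²_E − (m_A + C')‖w₁ − w₂‖²_H`. -/
theorem stmt_6 {E G : Type*}
    [NormedAddCommGroup E] [InnerProductSpace ℝ E] [CompleteSpace E]
    [NormedAddCommGroup G] [InnerProductSpace ℝ G] [CompleteSpace G]
    (γ : E →L[ℝ] G) (nH : E → ℝ) (hnH : ∀ v : E, 0 ≤ nH v)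
    (htrace : ∀ ε : ℝ, 0 < ε → ∃ C : ℝ, 0 < C ∧
      ∀ v : E, ‖γ v‖ ≤ ε * ‖v‖ + C * nH v)
    (A : E → (E →L[ℝ] ℝ)) (mA mj : ℝ) (hmA : 0 < mA) (hmj : 0 ≤ mj)
    (hmono : ∀ w₁ w₂ : E,
      (A w₁ - A w₂) (w₁ - w₂) ≥ mA * ‖w₁ - w₂‖ ^ 2 - mA * (nH (w₁ - w₂)) ^ 2) :
    ∀ ε : ℝ, 0 < ε → ε < mA → ∃ C' : ℝ, 0 < C' ∧
      ∀ (w₁ w₂ : E) (ξ₁ ξ₂ : G),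
        (inner ℝ (ξ₂ - ξ₁) (γ (w₁ - w₂)) : ℝ) ≥ -mj * ‖γ (w₁ - w₂)‖ ^ 2 →
        (A w₁ - A w₂) (w₁ - w₂) + (inner ℝ (ξ₂ - ξ₁) (γ (w₁ - w₂)) : ℝ) ≥
          (mA - ε) * ‖w₁ - w₂‖ ^ 2 - (mA + C') * (nH (w₁ - w₂)) ^ 2 := by
  intro ε hε hεA
  set δ := Real.sqrt (ε / (2 * (mj + 1))) with hδdef
  have hδpos : 0 < δ := Real.sqrt_pos.mpr (by positivity)
  have hδsq : δ ^ 2 = ε / (2 * (mj + 1)) := Real.sq_sqrt (by positivity)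
  obtain ⟨C, hC, hCtr⟩ := htrace δ hδpos
  refine ⟨2 * (mj + 1) * C ^ 2 + 1, by positivity, ?_⟩
  intro w₁ w₂ ξ₁ ξ₂ hξ
  set w := w₁ - w₂ with hw
  have h1 := hmono w₁ w₂
  have h2 := hCtr w
  have hγ : ‖γ w‖ ^ 2 ≤ (δ * ‖w‖ + C * nH w) ^ 2 := by
    have := norm_nonneg (γ w)
    nlinarith [norm_nonneg w, hnH w, mul_nonneg hδpos.le (norm_nonneg w),
      mul_nonneg hC.le (hnH w)]
  have key : mj * ‖γ w‖ ^ 2 ≤ ε * ‖w‖ ^ 2 + (2 * (mj + 1) * C ^ 2 + 1) * nH w ^ 2 := by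
    have hub : mj * ‖γ w‖ ^ 2 ≤ mj * (2 * δ ^ 2 * ‖w‖ ^ 2 + 2 * C ^ 2 * nH w ^ 2) := by
      have : (δ * ‖w‖ + C * nH w) ^ 2 ≤ 2 * δ ^ 2 * ‖w‖ ^ 2 + 2 * C ^ 2 * nH w ^ 2 := by
        nlinarith [sq_nonneg (δ * ‖w‖ - C * nH w)]
      nlinarith
    have hmjδ : mj * (2 * δ ^ 2) ≤ ε := by
      rw [hδsq]
      have heq : mj * (2 * (ε / (2 * (mj + 1)))) = mj / (mj + 1) * ε := by
        field_simp
      rw [heq]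
      have hle : mj / (mj + 1) ≤ 1 := by
        rw [div_le_one (by linarith)]; linarith
      nlinarith
    nlinarith [sq_nonneg (nH w), sq_nonneg ‖w‖, sq_nonneg C, mul_nonneg hmj (sq_nonneg C)]
  nlinarith [hξ]
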